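/- arXiv:1911.04246 — 5 statements merged into one kernel-verified Lean document; each statement's English description precedes it below -/
import Mathlib

section
/- Transformation rule for the linearized operator under the Legendre–Lewy transform: let Ω ⊂ ℝⁿ be open, F a C¹ function on n×n matrices, K ∈ ℝ, and u a smooth function on Ω with F(D²u(x)) = 0 for all x ∈ Ω, such that K·I + D²u(x) is positive definite and the map y(x) = Du(x) + Kx is a diffeomorphism of Ω onto its image, with inverse x(y). Define G(N) = −F(−K·I + N⁻¹) on invertible matrices. Then for every smooth function φ on Ω, setting φ*(y) = φ(x(y)), one has Σ_{i,j} (∂F/∂M_{ij})(D²u(x)) · ∂²φ/∂xᵢ∂xⱼ(x) = Σ_{i,j} (∂G/∂N_{ij})((K·I + D²u(x))⁻¹) · ∂²φ*/∂yᵢ∂yⱼ(y(x)) for all x ∈ Ω; in particular no first-order derivative terms of φ appear on the right-hand side. -/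
open Metric Real

noncomputable def pd {n : ℕ} (u : EuclideanSpace ℝ (Fin n) → ℝ)
    (x : EuclideanSpace ℝ (Fin n)) (i : Fin n) : ℝ :=
  fderiv ℝ u x (EuclideanSpace.single i 1)

noncomputable def pd2 {n : ℕ} (u : EuclideanSpace ℝ (Fin n) → ℝ)
    (x : EuclideanSpace ℝ (Fin n)) (i j : Fin n) : ℝ :=
  pd (fun y => pd u y j) x i

noncomputable def pd3 {n : ℕ} (u : EuclideanSpace ℝ (Fin n) → ℝ)
    (x : EuclideanSpace ℝ (Fin n)) (i j k : Fin n) : ℝ :=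
  pd (fun y => pd2 u y j k) x i

/-- The Hessian matrix of second partial derivatives. -/
noncomputable def hess {n : ℕ} (u : EuclideanSpace ℝ (Fin n) → ℝ)
    (x : EuclideanSpace ℝ (Fin n)) : Matrix (Fin n) (Fin n) ℝ :=
  Matrix.of fun i j => pd2 u x i j

/-- The sigma-2 polynomial of a matrix: half of (trace squared minus Frobenius norm squared). -/
noncomputable def sigma2M {n : ℕ} (H : Matrix (Fin n) (Fin n) ℝ) : ℝ :=
  ((∑ i, H i i) ^ 2 - ∑ i, ∑ j, (H i j) ^ 2) / 2

/-- Coefficients of the linearized operator of the sigma-2 equation. -/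
noncomputable def Fcoef {n : ℕ} (u : EuclideanSpace ℝ (Fin n) → ℝ)
    (x : EuclideanSpace ℝ (Fin n)) (i j : Fin n) : ℝ :=
  (∑ k, pd2 u x k k) * (if i = j then 1 else 0) - pd2 u x i j

/-- The largest eigenvalue of a (symmetric) matrix. -/
noncomputable def lambdaMax {n : ℕ} (M : Matrix (Fin n) (Fin n) ℝ) : ℝ :=
  sSup {r : ℝ | ∃ v : Fin n → ℝ, v ≠ 0 ∧ M.mulVec v = r • v}
attribute [local instance] Matrix.normedAddCommGroup Matrix.normedSpace

namespace LLaux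

open Matrix

variable {n : ℕ}

local notation "Eu" => EuclideanSpace ℝ (Fin n)
local notation "Mat" => Matrix (Fin n) (Fin n) ℝ

noncomputable def entryCLM (i j : Fin n) : Mat →L[ℝ] ℝ :=
  (ContinuousLinearMap.proj j).comp
    (ContinuousLinearMap.proj (R := ℝ) (φ := fun _ : Fin n => Fin n → ℝ) i)

@[simp] lemma entryCLM_apply (i j : Fin n) (M : Mat) : entryCLM i j M = M i j := rfl

theorem differentiable_det : Differentiable ℝ (fun N : Mat => N.det) := by
  simp only [Matrix.det_apply']
  apply Differentiable.fun_sum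
  intro σ _
  intro x
  have : DifferentiableAt ℝ (fun N : Matrix (Fin n) (Fin n) ℝ => ∏ i, N (σ i) i) x :=
    (HasFDerivAt.finset_prod
      (fun i (_ : i ∈ Finset.univ) => (entryCLM (σ i) i).hasFDerivAt)).differentiableAt
  exact this.const_mul _

theorem differentiable_updateRow (j : Fin n) (v : Fin n → ℝ) :
    Differentiable ℝ (fun N : Mat => N.updateRow j v) := by
  intro x
  refine differentiableAt_pi.mpr ?_
  intro a
  by_cases h : a = j
  · subst h; simp only [Matrix.updateRow_self]; exact differentiableAt_const _
  · simp only [Matrix.updateRow_ne h]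
    rw [differentiableAt_pi]
    intro b
    exact (entryCLM a b).differentiableAt

theorem differentiable_adj (i j : Fin n) :
    Differentiable ℝ (fun N : Mat => N.adjugate i j) := by
  simp only [Matrix.adjugate_apply]
  exact fun x => (differentiable_det _).comp x (differentiable_updateRow j _ x)

theorem differentiableAt_minv {N₀ : Mat} (h : IsUnit N₀.det) :
    DifferentiableAt ℝ (fun N : Mat => N⁻¹) N₀ := by
  have hd : N₀.det ≠ 0 := h.ne_zero
  have hev : ∀ᶠ N in nhds N₀, (fun N : Mat => N⁻¹) N =
      (fun N : Mat => (N.det)⁻¹ • N.adjugate) N := by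
    filter_upwards with N
    rw [Matrix.inv_def, Ring.inverse_eq_inv']
  apply DifferentiableAt.congr_of_eventuallyEq ?_ hev
  apply DifferentiableAt.fun_smul
  · exact (differentiable_det N₀).inv hd
  · refine differentiableAt_pi.mpr ?_
    intro a
    rw [differentiableAt_pi]
    intro b
    exact differentiable_adj a b N₀

theorem fderiv_matrix_entry {E' : Type*} [NormedAddCommGroup E'] [NormedSpace ℝ E']
    {f : E' → Mat} {x : E'} (hf : DifferentiableAt ℝ f x) (a b : Fin n) (v : E') :
    fderiv ℝ (fun y => f y a b) x v = (fderiv ℝ f x v) a b := by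
  have h := ((entryCLM a b).hasFDerivAt.comp x hf.hasFDerivAt).fderiv
  show (fderiv ℝ (⇑(entryCLM a b) ∘ f) x) v = _
  rw [h]
  rfl

theorem isOpen_unitdet : IsOpen {N : Mat | IsUnit N.det} := by
  have : {N : Mat | IsUnit N.det} = (fun N : Mat => N.det) ⁻¹' ({0}ᶜ) := by
    ext N; simp [isUnit_iff_ne_zero]
  rw [this]
  exact (isOpen_compl_singleton).preimage differentiable_det.continuous

theorem fderiv_minv {N₀ : Mat} (h : IsUnit N₀.det) (V : Mat) :
    fderiv ℝ (fun N : Mat => N⁻¹) N₀ V = -(N₀⁻¹ * V * N₀⁻¹) := by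
  have hdiff := differentiableAt_minv h
  set D := fderiv ℝ (fun N : Mat => N⁻¹) N₀ with hD
  have hmem : {N : Mat | IsUnit N.det} ∈ nhds N₀ := isOpen_unitdet.mem_nhds h
  have key : ∀ k j : Fin n, (N₀⁻¹ * V) k j + (D V * N₀) k j = 0 := by
    intro k j
    have hs : ∀ c : Fin n, HasFDerivAt (fun N : Mat => (N⁻¹) k c * N c j)
        (((N₀⁻¹) k c) • (entryCLM c j) + (N₀ c j) • ((entryCLM k c).comp D)) N₀ := by
      intro c
      have h1 : HasFDerivAt (fun N : Mat => (N⁻¹) k c) ((entryCLM k c).comp D) N₀ :=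
        (entryCLM k c).hasFDerivAt.comp N₀ hdiff.hasFDerivAt
      have h2 : HasFDerivAt (fun N : Mat => N c j) (entryCLM c j) N₀ :=
        (entryCLM c j).hasFDerivAt
      exact h1.mul h2
    have hsum : HasFDerivAt (fun N : Mat => ∑ c, (N⁻¹) k c * N c j)
        (∑ c, (((N₀⁻¹) k c) • (entryCLM c j) + (N₀ c j) • ((entryCLM k c).comp D))) N₀ :=
      HasFDerivAt.fun_sum (fun c _ => hs c)
    have hconst : (fun N : Mat => ∑ c, (N⁻¹) k c * N c j) =ᶠ[nhds N₀]
        (fun _ : Mat => (1 : Mat) k j) := by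
      filter_upwards [hmem] with N hN
      rw [← Matrix.mul_apply, Matrix.nonsing_inv_mul N hN]
    have h0 : fderiv ℝ (fun N : Mat => ∑ c, (N⁻¹) k c * N c j) N₀ =
        fderiv ℝ (fun _ : Mat => (1 : Mat) k j) N₀ := hconst.fderiv_eq
    rw [hsum.fderiv, fderiv_fun_const] at h0
    have h0V := congrArg (fun (L : Mat →L[ℝ] ℝ) => L V) h0
    simp only [ContinuousLinearMap.coe_sum', Finset.sum_apply, ContinuousLinearMap.add_apply,
      ContinuousLinearMap.coe_smul', Pi.smul_apply, ContinuousLinearMap.coe_comp',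
      Function.comp_apply, entryCLM_apply, ContinuousLinearMap.zero_apply,
      ContinuousLinearMap.coe_zero, Pi.zero_apply, smul_eq_mul] at h0V
    rw [Matrix.mul_apply, Matrix.mul_apply]
    rw [← h0V, ← Finset.sum_add_distrib]
    apply Finset.sum_congr rfl
    intro c _
    ring
  have hmat : N₀⁻¹ * V + D V * N₀ = 0 := by
    ext k j
    simpa using key k j
  have hDV : D V * N₀ = -(N₀⁻¹ * V) := by
    rw [eq_neg_iff_add_eq_zero, add_comm]; exact hmat
  calc D V = D V * (N₀ * N₀⁻¹) := by rw [Matrix.mul_nonsing_inv N₀ h, Matrix.mul_one]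
    _ = (D V * N₀) * N₀⁻¹ := by rw [Matrix.mul_assoc]
    _ = -(N₀⁻¹ * V * N₀⁻¹) := by rw [hDV]; simp [Matrix.mul_assoc]

theorem clm_expand (L : Mat →L[ℝ] ℝ) (M : Mat) :
    L M = ∑ a, ∑ b, M a b * L (Matrix.single a b 1) := by
  conv_lhs => rw [Matrix.matrix_eq_sum_single M]
  rw [map_sum]
  apply Finset.sum_congr rfl
  intro a _
  rw [map_sum]
  apply Finset.sum_congr rfl
  intro b _
  have : Matrix.single a b (M a b) = (M a b) • Matrix.single a b 1 := by
    rw [Matrix.smul_single, smul_eq_mul, mul_one]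
  rw [this, _root_.map_smul, smul_eq_mul]

theorem sandwich_entry (A : Mat) (i j a b : Fin n) :
    (A * Matrix.single i j 1 * A : Mat) a b = A a i * A j b := by
  simp [Matrix.mul_apply, Matrix.single, Finset.sum_ite_eq, ite_and, Finset.mul_sum]

theorem fderiv_G (F : Mat → ℝ) (hF : ContDiff ℝ 1 F) (K : ℝ) {A : Mat} (hA : IsUnit A.det)
    (i j : Fin n) :
    fderiv ℝ (fun N : Mat => -F (-(K • (1:Mat)) + N⁻¹)) A⁻¹ (Matrix.single i j 1)
      = ∑ a, ∑ b, A a i * A j b *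
          fderiv ℝ F (-(K • (1:Mat)) + A) (Matrix.single a b 1) := by
  have hAinv : IsUnit (A⁻¹).det := by
    rw [Matrix.det_nonsing_inv, Ring.inverse_eq_inv', isUnit_iff_ne_zero]
    exact inv_ne_zero hA.ne_zero
  have hinvinv : (A⁻¹)⁻¹ = A := Matrix.nonsing_inv_nonsing_inv A hA
  have h1 : HasFDerivAt (fun N : Mat => N⁻¹) (fderiv ℝ (fun N : Mat => N⁻¹) A⁻¹) A⁻¹ :=
    (differentiableAt_minv hAinv).hasFDerivAt
  have h2 : HasFDerivAt (fun N : Mat => -(K • (1:Mat)) + N⁻¹)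
      (fderiv ℝ (fun N : Mat => N⁻¹) A⁻¹) A⁻¹ := h1.const_add _
  have hFd : DifferentiableAt ℝ F (-(K • (1:Mat)) + A) := hF.differentiable one_ne_zero _
  have hFd' : HasFDerivAt F (fderiv ℝ F (-(K • (1:Mat)) + A)) (-(K • (1:Mat)) + (A⁻¹)⁻¹) := by
    rw [hinvinv]; exact hFd.hasFDerivAt
  have h3 := (hFd'.comp (A⁻¹) h2).fun_neg
  rw [show (fun N : Mat => -F (-(K • (1:Mat)) + N⁻¹))
      = (fun x => -(F ∘ fun N : Mat => -(K • (1:Mat)) + N⁻¹) x) from rfl,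
    show fderiv ℝ (fun x => -(F ∘ fun N : Mat => -(K • (1:Mat)) + N⁻¹) x) A⁻¹ = _ from h3.fderiv]
  have h4 : ∀ V : Mat, fderiv ℝ (fun N : Mat => N⁻¹) A⁻¹ V = -(A * V * A) := by
    intro V
    rw [fderiv_minv hAinv V, hinvinv]
  change -(fderiv ℝ F (-(K • (1:Mat)) + A)
    (fderiv ℝ (fun N : Mat => N⁻¹) A⁻¹ (Matrix.single i j 1))) = _
  rw [h4, map_neg, neg_neg]
  rw [clm_expand (fderiv ℝ F (-(K • (1:Mat)) + A)) (A * Matrix.single i j 1 * A)]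
  apply Finset.sum_congr rfl; intro a _
  apply Finset.sum_congr rfl; intro b _
  rw [sandwich_entry]

theorem sum_mul_entries (M N : Mat) :
    ∑ i, ∑ j, M i j * N i j = Matrix.trace (M * Nᵀ) := by
  simp [Matrix.trace, Matrix.mul_apply, Matrix.diag]

theorem key_algebra (Fm A B P2 : Mat) (P1 : Fin n → ℝ)
    (W T3 : Fin n → Fin n → Fin n → ℝ)
    (hA : ∀ a b, A a b = A b a)
    (hBA : B * A = 1)
    (hW : ∀ k i b, ∑ c, W k i c * A c b = -∑ c, B k c * ∑ m, T3 m c b * B m i)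
    (hF3 : ∀ m, ∑ a, ∑ b, Fm a b * T3 m a b = 0)
    (hT3 : ∀ a c b, T3 a c b = T3 c a b) :
    ∑ i, ∑ j, Fm i j * P2 i j
      = ∑ i, ∑ j, (∑ a, ∑ b, A a i * A j b * Fm a b)
          * ((∑ k, (∑ l, P2 l k * B l i) * B k j) + ∑ k, P1 k * W k i j) := by
  have hAT : Aᵀ = A := by ext a b; exact hA b a
  have hABt : A * Bᵀ = 1 := by
    calc A * Bᵀ = (B * Aᵀ)ᵀ := by rw [Matrix.transpose_mul, Matrix.transpose_transpose]
    _ = (B * A)ᵀ := by rw [hAT]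
    _ = 1 := by rw [hBA, Matrix.transpose_one]
  have hg : ∀ i j, (∑ a, ∑ b, A a i * A j b * Fm a b) = (A * Fm * A) i j := by
    intro i j
    rw [Finset.sum_comm]
    rw [Matrix.mul_apply]
    apply Finset.sum_congr rfl
    intro b _
    rw [Matrix.mul_apply, Finset.sum_mul]
    apply Finset.sum_congr rfl
    intro a _
    rw [hA a i, hA j b]
    ring
  have hS1 : ∀ i j, (∑ k, (∑ l, P2 l k * B l i) * B k j) = (Bᵀ * P2 * B) i j := by
    intro i j
    rw [Matrix.mul_apply]
    apply Finset.sum_congr rfl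
    intro k _
    rw [Matrix.mul_apply]
    congr 1
    apply Finset.sum_congr rfl
    intro l _
    rw [Matrix.transpose_apply]
    ring
  have step1 : ∑ i, ∑ j, (∑ a, ∑ b, A a i * A j b * Fm a b)
          * ((∑ k, (∑ l, P2 l k * B l i) * B k j) + ∑ k, P1 k * W k i j)
      = (∑ i, ∑ j, (A * Fm * A) i j * (Bᵀ * P2 * B) i j)
        + ∑ i, ∑ j, (A * Fm * A) i j * ∑ k, P1 k * W k i j := by
    rw [← Finset.sum_add_distrib]
    apply Finset.sum_congr rfl; intro i _
    rw [← Finset.sum_add_distrib]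
    apply Finset.sum_congr rfl; intro j _
    rw [hg i j, hS1 i j, mul_add]
  rw [step1]
  have hT1 : ∑ i, ∑ j, (A * Fm * A) i j * (Bᵀ * P2 * B) i j
      = ∑ i, ∑ j, Fm i j * P2 i j := by
    rw [sum_mul_entries, sum_mul_entries]
    have e1 : (Bᵀ * P2 * B)ᵀ = Bᵀ * (P2ᵀ * B) := by
      rw [Matrix.transpose_mul, Matrix.transpose_mul, Matrix.transpose_transpose]
    rw [e1]
    have e2 : A * Fm * A * (Bᵀ * (P2ᵀ * B)) = (A * Fm) * ((A * Bᵀ) * (P2ᵀ * B)) := by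
      simp only [Matrix.mul_assoc]
    rw [e2, hABt, Matrix.one_mul, Matrix.trace_mul_comm]
    have e3 : P2ᵀ * B * (A * Fm) = P2ᵀ * ((B * A) * Fm) := by simp only [Matrix.mul_assoc]
    rw [e3, hBA, Matrix.one_mul, Matrix.trace_mul_comm]
  have hT2 : ∀ k, ∑ i, ∑ j, (A * Fm * A) i j * W k i j = 0 := by
    intro k
    have hsum : ∑ i, ∑ j, (A * Fm * A) i j * W k i j
        = Matrix.trace ((A * Fm * A) * (Matrix.of fun i j => W k i j)ᵀ) :=
      sum_mul_entries _ _
    set Wk : Mat := Matrix.of fun i j => W k i j with hWk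
    set Ck : Mat := Matrix.of fun m b => ∑ c, B k c * T3 m c b with hCk
    have hclaim : Wk * A = -(Bᵀ * Ck) := by
      ext i b
      rw [Matrix.mul_apply]
      have hwib := hW k i b
      simp only [hWk, Matrix.of_apply] at hwib ⊢
      rw [hwib]
      simp only [Matrix.neg_apply, Matrix.mul_apply, Matrix.transpose_apply, hCk,
        Matrix.of_apply]
      congr 1
      simp_rw [Finset.mul_sum]
      rw [Finset.sum_comm]
      apply Finset.sum_congr rfl
      intro m _
      apply Finset.sum_congr rfl
      intro c _
      ring
    have hAW : A * Wkᵀ = -(Ckᵀ * B) := by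
      calc A * Wkᵀ = (Wk * Aᵀ)ᵀ := by rw [Matrix.transpose_mul, Matrix.transpose_transpose]
      _ = (Wk * A)ᵀ := by rw [hAT]
      _ = (-(Bᵀ * Ck))ᵀ := by rw [hclaim]
      _ = -(Ckᵀ * B) := by rw [Matrix.transpose_neg, Matrix.transpose_mul,
            Matrix.transpose_transpose]
    have e4 : (A * Fm * A) * Wkᵀ = (A * Fm) * (A * Wkᵀ) := by simp only [Matrix.mul_assoc]
    rw [hsum, e4, hAW]
    have e5 : (A * Fm) * -(Ckᵀ * B) = -((A * Fm * Ckᵀ) * B) := by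
      rw [Matrix.mul_neg]; simp only [Matrix.mul_assoc]
    rw [e5, Matrix.trace_neg, Matrix.trace_mul_comm]
    have e6 : B * (A * Fm * Ckᵀ) = (B * A) * (Fm * Ckᵀ) := by simp only [Matrix.mul_assoc]
    rw [e6, hBA, Matrix.one_mul]
    have e7 : Matrix.trace (Fm * Ckᵀ) = ∑ a, ∑ b, Fm a b * Ck a b := (sum_mul_entries _ _).symm
    rw [e7]
    have hCkab : ∀ a b : Fin n, Ck a b = ∑ c, B k c * T3 a c b := fun a b => rfl
    have hfin : ∑ a, ∑ b, Fm a b * Ck a b = ∑ c, B k c * ∑ a, ∑ b, Fm a b * T3 c a b := by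
      simp_rw [hCkab, Finset.mul_sum]
      have e1 : ∀ a : Fin n, ∑ b, ∑ c, Fm a b * (B k c * T3 a c b)
          = ∑ c, ∑ b, Fm a b * (B k c * T3 a c b) := fun a => Finset.sum_comm
      simp_rw [e1]
      rw [Finset.sum_comm]
      apply Finset.sum_congr rfl; intro c _
      apply Finset.sum_congr rfl; intro a _
      apply Finset.sum_congr rfl; intro b _
      rw [hT3 a c b]; ring
    rw [hfin]
    simp [hF3]
  have hzero : ∑ i, ∑ j, (A * Fm * A) i j * ∑ k, P1 k * W k i j = 0 := by
    have e8 : ∀ i j, (A * Fm * A) i j * ∑ k, P1 k * W k i j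
        = ∑ k, P1 k * ((A * Fm * A) i j * W k i j) := by
      intro i j
      rw [Finset.mul_sum]
      apply Finset.sum_congr rfl; intro k _; ring
    simp_rw [e8]
    have h3 : ∀ i : Fin n, ∑ j, ∑ k, P1 k * ((A * Fm * A) i j * W k i j)
        = ∑ k, ∑ j, P1 k * ((A * Fm * A) i j * W k i j) := fun i => Finset.sum_comm
    simp_rw [h3]
    rw [Finset.sum_comm]
    apply Finset.sum_eq_zero
    intro k _
    simp_rw [← Finset.mul_sum]
    rw [hT2 k, mul_zero]
  rw [hT1, hzero, add_zero]

theorem euclid_expand (v : Eu) : v = ∑ i, v i • EuclideanSpace.single i 1 := by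
  ext j
  rw [WithLp.ofLp_sum, Fintype.sum_apply]
  simp [EuclideanSpace.single_apply]

theorem clm_eucl_expand (L : Eu →L[ℝ] ℝ) (v : Eu) :
    L v = ∑ i, v i * L (EuclideanSpace.single i 1) := by
  conv_lhs => rw [euclid_expand v]
  rw [map_sum]
  simp [smul_eq_mul]

theorem clm_coord_expand (L : Eu →L[ℝ] Eu) (v : Eu) (k : Fin n) :
    (L v) k = ∑ c, v c * (L (EuclideanSpace.single c 1)) k := by
  conv_lhs => rw [euclid_expand v]
  rw [map_sum, WithLp.ofLp_sum, Fintype.sum_apply]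
  apply Finset.sum_congr rfl
  intro c _
  rw [_root_.map_smul]
  rfl

theorem pd_congr {f g : Eu → ℝ} {x : Eu} (h : f =ᶠ[nhds x] g) (i : Fin n) :
    pd f x i = pd g x i := by
  unfold pd; rw [h.fderiv_eq]

theorem pd_coord {X : Eu → Eu} {y : Eu} (hX : DifferentiableAt ℝ X y) (l i : Fin n) :
    pd (fun z => X z l) y i = (fderiv ℝ X y (EuclideanSpace.single i 1)) l := by
  unfold pd
  have h := ((EuclideanSpace.proj l (𝕜 := ℝ)).hasFDerivAt.comp y hX.hasFDerivAt).fderiv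
  rw [show (fun z => X z l) = (⇑(EuclideanSpace.proj l (𝕜 := ℝ)) ∘ X) from rfl, h]
  rfl

theorem pd_comp {X : Eu → Eu} {g : Eu → ℝ} {y : Eu}
    (hX : DifferentiableAt ℝ X y) (hg : DifferentiableAt ℝ g (X y)) (i : Fin n) :
    pd (fun z => g (X z)) y i
      = ∑ l, pd g (X y) l * pd (fun z => X z l) y i := by
  have h := (hg.hasFDerivAt.comp y hX.hasFDerivAt).fderiv
  unfold pd
  rw [show (fun z => g (X z)) = (g ∘ X) from rfl, h]
  rw [ContinuousLinearMap.comp_apply]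
  rw [clm_eucl_expand (fderiv ℝ g (X y)) (fderiv ℝ X y (EuclideanSpace.single i 1))]
  apply Finset.sum_congr rfl
  intro l _
  have hc := pd_coord hX l i
  unfold pd at hc
  rw [hc]
  ring

theorem contDiffOn_pd {f : Eu → ℝ} {Ω : Set Eu} (hf : ContDiffOn ℝ (⊤ : ℕ∞) f Ω)
    (hΩ : IsOpen Ω) (i : Fin n) :
    ContDiffOn ℝ (⊤ : ℕ∞) (fun x => pd f x i) Ω := by
  have hd : ContDiffOn ℝ (⊤ : ℕ∞) (fderiv ℝ f) Ω :=
    ((contDiffOn_infty_iff_fderiv_of_isOpen hΩ).mp hf).2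
  have heq : (fun x => pd f x i)
      = fun x => (ContinuousLinearMap.apply ℝ ℝ
          (EuclideanSpace.single i (1:ℝ))) (fderiv ℝ f x) := rfl
  rw [heq]
  exact (ContinuousLinearMap.apply ℝ ℝ
    (EuclideanSpace.single i (1:ℝ))).contDiff.comp_contDiffOn hd

theorem fderiv_clm_apply_const {g : Eu → (Eu →L[ℝ] ℝ)} {x : Eu}
    (hg : DifferentiableAt ℝ g x) (v w : Eu) :
    fderiv ℝ (fun y => g y v) x w = (fderiv ℝ g x w) v := by
  have h := ((ContinuousLinearMap.apply ℝ ℝ v).hasFDerivAt.comp x hg.hasFDerivAt).fderiv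
  rw [show (fun y => g y v) = (⇑(ContinuousLinearMap.apply ℝ ℝ v) ∘ g) from rfl, h]
  rfl

theorem pd2_eq_fderiv2 {f : Eu → ℝ} {x : Eu} (hd : DifferentiableAt ℝ (fderiv ℝ f) x)
    (i j : Fin n) :
    pd2 f x i j = fderiv ℝ (fderiv ℝ f) x (EuclideanSpace.single i 1)
      (EuclideanSpace.single j 1) := by
  unfold pd2 pd
  rw [fderiv_clm_apply_const hd]

theorem pd2_symm' {f : Eu → ℝ} {x : Eu} (hf : ContDiffAt ℝ ((⊤ : ℕ∞) : WithTop ℕ∞) f x)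
    (i j : Fin n) : pd2 f x i j = pd2 f x j i := by
  have hd : DifferentiableAt ℝ (fderiv ℝ f) x := by
    have h1 : ContDiffAt ℝ ((1 : ℕ∞) : WithTop ℕ∞) (fderiv ℝ f) x :=
      hf.fderiv_right (by exact_mod_cast le_top)
    exact h1.differentiableAt (by simp)
  have hsym := hf.isSymmSndFDerivAt
    (by rw [minSmoothness_of_isRCLikeNormedField]; exact WithTop.coe_le_coe.mpr le_top)
    (𝕜 := ℝ)
  rw [pd2_eq_fderiv2 hd, pd2_eq_fderiv2 hd]
  exact hsym _ _

theorem pd_sum_mul {f g : Fin n → Eu → ℝ} {y : Eu}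
    (hf : ∀ k, DifferentiableAt ℝ (f k) y) (hg : ∀ k, DifferentiableAt ℝ (g k) y)
    (i : Fin n) :
    pd (fun z => ∑ k, f k z * g k z) y i
      = ∑ k, (pd (f k) y i * g k y + f k y * pd (g k) y i) := by
  have hk : ∀ k : Fin n, HasFDerivAt (fun z => f k z * g k z)
      (f k y • fderiv ℝ (g k) y + g k y • fderiv ℝ (f k) y) y :=
    fun k => ((hf k).hasFDerivAt).mul ((hg k).hasFDerivAt)
  have hsum := HasFDerivAt.fun_sum (fun k (_ : k ∈ Finset.univ) => hk k)
  unfold pd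
  rw [hsum.fderiv]
  simp only [ContinuousLinearMap.coe_sum', Finset.sum_apply, ContinuousLinearMap.add_apply,
    ContinuousLinearMap.coe_smul', Pi.smul_apply, smul_eq_mul]
  apply Finset.sum_congr rfl
  intro k _
  ring

theorem pd_const_add {h : Eu → ℝ} {y : Eu} (c : ℝ) (i : Fin n) :
    pd (fun z => c + h z) y i = pd h y i := by
  unfold pd
  rw [fderiv_const_add]

theorem gradient_coord (u : Eu → ℝ) (z : Eu) (i : Fin n) :
    (gradient u z) i = pd u z i := by
  have h1 : inner ℝ (gradient u z) (EuclideanSpace.single i (1:ℝ))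
      = fderiv ℝ u z (EuclideanSpace.single i 1) :=
    InnerProductSpace.toDual_symm_apply
  rw [EuclideanSpace.inner_single_right] at h1
  simpa [pd] using h1

theorem Y_deriv_coords {u : Eu → ℝ} {x : Eu} (hd : DifferentiableAt ℝ (fderiv ℝ u) x) (K : ℝ) :
    ∃ LY : Eu →L[ℝ] Eu, HasFDerivAt (fun z : Eu => gradient u z + K • z) LY x ∧
      ∀ i j, (LY (EuclideanSpace.single j 1)) i
        = pd2 u x j i + K * (if i = j then 1 else 0) := by
  classical
  set eqv : Eu ≃L[ℝ] (Fin n → ℝ) := PiLp.continuousLinearEquiv 2 ℝ _ with heqv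
  set Li : Fin n → (Eu →L[ℝ] ℝ) := fun i =>
    (ContinuousLinearMap.apply ℝ ℝ (EuclideanSpace.single i (1:ℝ))).comp
      (fderiv ℝ (fderiv ℝ u) x) + K • (EuclideanSpace.proj i (𝕜 := ℝ)) with hLi
  have hcomp : ∀ i : Fin n, HasFDerivAt (fun z : Eu => pd u z i + K * z i) (Li i) x := by
    intro i
    apply HasFDerivAt.add
    · exact (ContinuousLinearMap.apply ℝ ℝ (EuclideanSpace.single i (1:ℝ))).hasFDerivAt.comp
        x hd.hasFDerivAt
    · have hp : HasFDerivAt (fun z : Eu => z i) (EuclideanSpace.proj i (𝕜 := ℝ)) x :=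
        (EuclideanSpace.proj i (𝕜 := ℝ)).hasFDerivAt
      simpa using hp.const_mul K
  have hpi : HasFDerivAt (fun z : Eu => (fun i : Fin n => pd u z i + K * z i))
      (ContinuousLinearMap.pi Li) x := hasFDerivAt_pi.mpr hcomp
  have hfun : (fun z : Eu => gradient u z + K • z)
      = fun z => eqv.symm (fun i : Fin n => pd u z i + K * z i) := by
    funext z
    ext i
    show (gradient u z + K • z) i = pd u z i + K * z i
    rw [show (gradient u z + K • z) i = (gradient u z) i + K * z i from rfl,
      gradient_coord]
  refine ⟨(eqv.symm : (Fin n → ℝ) →L[ℝ] Eu).comp (ContinuousLinearMap.pi Li), ?_, ?_⟩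
  · rw [hfun]
    exact (eqv.symm : (Fin n → ℝ) →L[ℝ] Eu).hasFDerivAt.comp x hpi
  · intro i j
    have h5 : ((eqv.symm : (Fin n → ℝ) →L[ℝ] Eu).comp (ContinuousLinearMap.pi Li))
        (EuclideanSpace.single j 1) i = Li i (EuclideanSpace.single j 1) := rfl
    rw [h5, hLi]
    simp only [ContinuousLinearMap.add_apply, ContinuousLinearMap.coe_comp',
      Function.comp_apply, ContinuousLinearMap.apply_apply,
      ContinuousLinearMap.smul_apply, smul_eq_mul]
    rw [pd2_eq_fderiv2 hd]
    congr 1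
    have h6 : EuclideanSpace.proj i (𝕜 := ℝ) (EuclideanSpace.single j (1:ℝ))
        = (if i = j then (1:ℝ) else 0) := by
      simp [EuclideanSpace.single_apply]
    rw [h6]

end LLaux


/-- Transformation rule for the linearized operator under the Legendre-Lewy transform:
no first-order terms appear, and the coefficients transform as stated. -/
theorem legendre_lewy_transformation_rule
    (n : ℕ) (K : ℝ) (Ω : Set (EuclideanSpace ℝ (Fin n))) (hΩ : IsOpen Ω)
    (F : Matrix (Fin n) (Fin n) ℝ → ℝ) (hF : ContDiff ℝ 1 F)
    (u : EuclideanSpace ℝ (Fin n) → ℝ) (hu : ContDiffOn ℝ (⊤ : ℕ∞) u Ω)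
    (heq : ∀ x ∈ Ω, F (hess u x) = 0)
    (hposdef : ∀ x ∈ Ω,
      (K • (1 : Matrix (Fin n) (Fin n) ℝ) + hess u x).PosDef)
    (Y X : EuclideanSpace ℝ (Fin n) → EuclideanSpace ℝ (Fin n))
    (hY : ∀ x, Y x = gradient u x + K • x)
    (hXY : ∀ x ∈ Ω, X (Y x) = x)
    (hinj : Set.InjOn Y Ω)
    (hYopen : IsOpen (Y '' Ω))
    (hXsmooth : ContDiffOn ℝ (⊤ : ℕ∞) X (Y '' Ω)) :
    ∀ φ : EuclideanSpace ℝ (Fin n) → ℝ, ContDiffOn ℝ (⊤ : ℕ∞) φ Ω → ∀ x ∈ Ω,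
      ∑ i, ∑ j, fderiv ℝ F (hess u x) (Matrix.single i j 1) * pd2 φ x i j
        = ∑ i, ∑ j,
            fderiv ℝ
              (fun N : Matrix (Fin n) (Fin n) ℝ =>
                -F (-(K • (1 : Matrix (Fin n) (Fin n) ℝ)) + N⁻¹))
              ((K • (1 : Matrix (Fin n) (Fin n) ℝ) + hess u x)⁻¹)
              (Matrix.single i j 1)
            * pd2 (fun y => φ (X y)) (Y x) i j := by
  classical
  intro φ hφ x₀ hx₀
  have hone : ((⊤:ℕ∞) : WithTop ℕ∞) ≠ 0 := by simp
  have hy₀ : Y x₀ ∈ Y '' Ω := ⟨x₀, hx₀, rfl⟩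
  have hYfun : Y = fun z => gradient u z + K • z := funext hY
  have hXmem : ∀ y ∈ Y '' Ω, X y ∈ Ω := by
    rintro y ⟨x', hx', rfl⟩; rw [hXY x' hx']; exact hx'
  have hXx₀ : X (Y x₀) = x₀ := hXY x₀ hx₀
  have hXd : ∀ y ∈ Y '' Ω, DifferentiableAt ℝ X y := fun y hy =>
    (hXsmooth.contDiffAt (hYopen.mem_nhds hy)).differentiableAt hone
  have hXc : ∀ k : Fin n, ContDiffOn ℝ (⊤:ℕ∞) (fun z => X z k) (Y '' Ω) := fun k =>
    (EuclideanSpace.proj k (𝕜 := ℝ)).contDiff.comp_contDiffOn hXsmooth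
  have hupd : ∀ b, ContDiffOn ℝ (⊤:ℕ∞) (fun x => pd u x b) Ω := fun b =>
    LLaux.contDiffOn_pd hu hΩ b
  have hupd2 : ∀ a b, ContDiffOn ℝ (⊤:ℕ∞) (fun x => pd2 u x a b) Ω := fun a b =>
    LLaux.contDiffOn_pd (hupd b) hΩ a
  have hφpd : ∀ k, ContDiffOn ℝ (⊤:ℕ∞) (fun x => pd φ x k) Ω := fun k =>
    LLaux.contDiffOn_pd hφ hΩ k
  have hdu : ∀ x ∈ Ω, DifferentiableAt ℝ (fderiv ℝ u) x := by
    intro x hx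
    have h2 := ((contDiffOn_infty_iff_fderiv_of_isOpen hΩ).mp hu).2
    exact (h2.contDiffAt (hΩ.mem_nhds hx)).differentiableAt hone
  -- the fundamental first-order identity : D X (Y x) ∘ D Y x = id, in coordinates
  have hscalar : ∀ x ∈ Ω, ∀ k b : Fin n,
      ∑ c, pd (fun z => X z k) (Y x) c * (K * (if c = b then 1 else 0) + pd2 u x c b)
        = (if k = b then 1 else 0) := by
    intro x hx k b
    obtain ⟨LY, hLY0, hLYc⟩ := LLaux.Y_deriv_coords (hdu x hx) K
    have hLY : HasFDerivAt Y LY x := by rw [hYfun]; exact hLY0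
    have hyx : Y x ∈ Y '' Ω := ⟨x, hx, rfl⟩
    have hXdy := hXd _ hyx
    have hchain : HasFDerivAt (fun z => X (Y z)) ((fderiv ℝ X (Y x)).comp LY) x :=
      hXdy.hasFDerivAt.comp x hLY
    have hev : (fun z : EuclideanSpace ℝ (Fin n) => z) =ᶠ[nhds x] (fun z => X (Y z)) := by
      filter_upwards [hΩ.mem_nhds hx] with z hz
      exact (hXY z hz).symm
    have hidd : HasFDerivAt (fun z : EuclideanSpace ℝ (Fin n) => z)
        ((fderiv ℝ X (Y x)).comp LY) x := hchain.congr_of_eventuallyEq hev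
    have huniq : (fderiv ℝ X (Y x)).comp LY
        = ContinuousLinearMap.id ℝ (EuclideanSpace ℝ (Fin n)) :=
      hidd.unique (hasFDerivAt_id x)
    have happ := congrArg
      (fun L : EuclideanSpace ℝ (Fin n) →L[ℝ] EuclideanSpace ℝ (Fin n) =>
        (L (EuclideanSpace.single b 1)) k) huniq
    simp only [ContinuousLinearMap.coe_comp', Function.comp_apply,
      ContinuousLinearMap.coe_id', id_eq] at happ
    rw [LLaux.clm_coord_expand] at happ
    have hrhs : (EuclideanSpace.single b (1:ℝ)) k = (if k = b then (1:ℝ) else 0) := by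
      simp [EuclideanSpace.single_apply]
    rw [hrhs] at happ
    rw [← happ]
    apply Finset.sum_congr rfl
    intro c _
    have h1 : (LY (EuclideanSpace.single b 1)) c
        = K * (if c = b then 1 else 0) + pd2 u x c b := by
      rw [hLYc c b, LLaux.pd2_symm' (hu.contDiffAt (hΩ.mem_nhds hx)) b c, add_comm]
    have h2 : (fderiv ℝ X (Y x) (EuclideanSpace.single c 1)) k
        = pd (fun z => X z k) (Y x) c := (LLaux.pd_coord hXdy k c).symm
    rw [h1, h2]
    ring
  set A : Matrix (Fin n) (Fin n) ℝ := K • (1 : Matrix (Fin n) (Fin n) ℝ) + hess u x₀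
    with hAdef
  have hposA := hposdef x₀ hx₀
  have hAdet : IsUnit A.det := isUnit_iff_ne_zero.mpr (ne_of_gt hposA.det_pos)
  have hAentry : ∀ a b, A a b = K * (if a = b then 1 else 0) + pd2 u x₀ a b := by
    intro a b
    rw [hAdef]
    simp [Matrix.add_apply, Matrix.smul_apply, Matrix.one_apply, hess, smul_eq_mul]
  have hAsym : ∀ a b, A a b = A b a := by
    intro a b
    rw [hAentry a b, hAentry b a,
      LLaux.pd2_symm' (hu.contDiffAt (hΩ.mem_nhds hx₀)) a b]
    congr 1
    by_cases h : a = b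
    · subst h; rfl
    · rw [if_neg h, if_neg (Ne.symm h)]
  have hKA : -(K • (1 : Matrix (Fin n) (Fin n) ℝ)) + A = hess u x₀ := by
    rw [hAdef]; exact neg_add_cancel_left _ _
  -- B * A = 1
  have hBA : (Matrix.of fun k c => pd (fun z => X z k) (Y x₀) c) * A = 1 := by
    ext k j
    rw [Matrix.mul_apply, Matrix.one_apply]
    calc ∑ c, (Matrix.of fun k c => pd (fun z => X z k) (Y x₀) c) k c * A c j
        = ∑ c, pd (fun z => X z k) (Y x₀) c
            * (K * (if c = j then 1 else 0) + pd2 u x₀ c j) := by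
          apply Finset.sum_congr rfl; intro c _; rw [hAentry c j]; rfl
      _ = if k = j then 1 else 0 := hscalar x₀ hx₀ k j
  -- the second-order identity for X
  have hWA : ∀ k i b : Fin n,
      ∑ c, pd2 (fun z => X z k) (Y x₀) i c * A c b
        = -∑ c, pd (fun z => X z k) (Y x₀) c
            * ∑ m, pd3 u x₀ m c b * pd (fun z => X z m) (Y x₀) i := by
    intro k i b
    have hfun : (fun y => ∑ c, pd (fun z => X z k) y c *
        (K * (if c = b then 1 else 0) + pd2 u (X y) c b))
        =ᶠ[nhds (Y x₀)] (fun _ => (if k = b then (1:ℝ) else 0)) := by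
      filter_upwards [hYopen.mem_nhds hy₀] with y hy
      obtain ⟨x', hx', rfl⟩ := hy
      rw [hXY x' hx']
      exact hscalar x' hx' k b
    have hpd0 : pd (fun y => ∑ c, pd (fun z => X z k) y c *
        (K * (if c = b then 1 else 0) + pd2 u (X y) c b)) (Y x₀) i = 0 := by
      rw [LLaux.pd_congr hfun i]
      unfold pd
      rw [fderiv_fun_const]
      rfl
    have hfk : ∀ c, DifferentiableAt ℝ (fun y => pd (fun z => X z k) y c) (Y x₀) := fun c =>
      ((LLaux.contDiffOn_pd (hXc k) hYopen c).contDiffAt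
        (hYopen.mem_nhds hy₀)).differentiableAt hone
    have hu2X : ∀ c, DifferentiableAt ℝ (fun x => pd2 u x c b) (X (Y x₀)) := by
      intro c
      rw [hXx₀]
      exact ((hupd2 c b).contDiffAt (hΩ.mem_nhds hx₀)).differentiableAt hone
    have hgc : ∀ c, DifferentiableAt ℝ
        (fun y => K * (if c = b then 1 else 0) + pd2 u (X y) c b) (Y x₀) := by
      intro c
      exact ((hu2X c).comp _ (hXd _ hy₀)).const_add _
    have hprod := LLaux.pd_sum_mul
      (f := fun c y => pd (fun z => X z k) y c)
      (g := fun c y => K * (if c = b then 1 else 0) + pd2 u (X y) c b)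
      hfk hgc i
    have hz : (0:ℝ) = ∑ c, (pd2 (fun z => X z k) (Y x₀) i c * A c b
        + pd (fun z => X z k) (Y x₀) c
          * ∑ m, pd3 u x₀ m c b * pd (fun z => X z m) (Y x₀) i) := by
      rw [← hpd0, hprod]
      apply Finset.sum_congr rfl
      intro c _
      rw [LLaux.pd_const_add, LLaux.pd_comp (hXd _ hy₀) (hu2X c) i, hXx₀, ← hAentry c b]
      rfl
    rw [Finset.sum_add_distrib] at hz
    linarith [hz]
  -- hF3 : differentiating the equation F(hess u) = 0
  have hhd : DifferentiableAt ℝ (hess u) x₀ := by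
    refine differentiableAt_pi.mpr ?_; intro a; rw [differentiableAt_pi]; intro b
    exact ((hupd2 a b).contDiffAt (hΩ.mem_nhds hx₀)).differentiableAt hone
  have hFdiff : DifferentiableAt ℝ F (hess u x₀) := (hF.differentiable one_ne_zero) _
  have hF3 : ∀ m, ∑ a, ∑ b,
      (Matrix.of fun a b => fderiv ℝ F (hess u x₀) (Matrix.single a b 1)) a b
        * pd3 u x₀ m a b = 0 := by
    intro m
    have hchain := hFdiff.hasFDerivAt.comp x₀ hhd.hasFDerivAt
    have hev : (F ∘ hess u) =ᶠ[nhds x₀] (fun _ => (0:ℝ)) := by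
      filter_upwards [hΩ.mem_nhds hx₀] with z hz using heq z hz
    have h0 : (fderiv ℝ F (hess u x₀)).comp (fderiv ℝ (hess u) x₀) = 0 := by
      have e := hchain.fderiv
      rw [hev.fderiv_eq, fderiv_fun_const] at e
      exact e.symm.trans rfl
    have happ := congrArg (fun L : EuclideanSpace ℝ (Fin n) →L[ℝ] ℝ =>
      L (EuclideanSpace.single m 1)) h0
    simp only [ContinuousLinearMap.coe_comp', Function.comp_apply,
      ContinuousLinearMap.zero_apply] at happ
    rw [LLaux.clm_expand (fderiv ℝ F (hess u x₀))
      (fderiv ℝ (hess u) x₀ (EuclideanSpace.single m 1))] at happ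
    rw [← happ]
    apply Finset.sum_congr rfl; intro a _
    apply Finset.sum_congr rfl; intro b _
    have he : (fderiv ℝ (hess u) x₀ (EuclideanSpace.single m 1)) a b
        = pd3 u x₀ m a b :=
      (LLaux.fderiv_matrix_entry hhd a b (EuclideanSpace.single m 1)).symm
    rw [he, Matrix.of_apply]
    ring
  have hT3 : ∀ a c b : Fin n, pd3 u x₀ a c b = pd3 u x₀ c a b := fun a c b =>
    LLaux.pd2_symm' ((hupd b).contDiffAt (hΩ.mem_nhds hx₀)) a c
  -- second derivative of the composite
  have hφd : ∀ z ∈ Ω, DifferentiableAt ℝ φ z := fun z hz =>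
    (hφ.contDiffAt (hΩ.mem_nhds hz)).differentiableAt hone
  have hφkX : ∀ k, DifferentiableAt ℝ (fun x => pd φ x k) (X (Y x₀)) := by
    intro k
    rw [hXx₀]
    exact ((hφpd k).contDiffAt (hΩ.mem_nhds hx₀)).differentiableAt hone
  have hf6 : ∀ i j, pd2 (fun y => φ (X y)) (Y x₀) i j
      = (∑ k, (∑ l, pd2 φ x₀ l k * pd (fun z => X z l) (Y x₀) i)
            * pd (fun z => X z k) (Y x₀) j)
        + ∑ k, pd φ x₀ k * pd2 (fun z => X z k) (Y x₀) i j := by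
    intro i j
    have hev : (fun y => pd (fun z => φ (X z)) y j)
        =ᶠ[nhds (Y x₀)] (fun y => ∑ k, pd φ (X y) k * pd (fun z => X z k) y j) := by
      filter_upwards [hYopen.mem_nhds hy₀] with y hy
      exact LLaux.pd_comp (hXd y hy) (hφd _ (hXmem y hy)) j
    have e0 : pd2 (fun y => φ (X y)) (Y x₀) i j
        = pd (fun y => ∑ k, pd φ (X y) k * pd (fun z => X z k) y j) (Y x₀) i :=
      LLaux.pd_congr hev i
    rw [e0]
    have hfk : ∀ k, DifferentiableAt ℝ (fun y => pd φ (X y) k) (Y x₀) := fun k =>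
      (hφkX k).comp _ (hXd _ hy₀)
    have hgk : ∀ k, DifferentiableAt ℝ (fun y => pd (fun z => X z k) y j) (Y x₀) := fun k =>
      ((LLaux.contDiffOn_pd (hXc k) hYopen j).contDiffAt
        (hYopen.mem_nhds hy₀)).differentiableAt hone
    rw [LLaux.pd_sum_mul
      (f := fun k y => pd φ (X y) k)
      (g := fun k y => pd (fun z => X z k) y j) hfk hgk i]
    rw [← Finset.sum_add_distrib]
    apply Finset.sum_congr rfl
    intro k _
    rw [LLaux.pd_comp (hXd _ hy₀) (hφkX k) i, hXx₀]
    rfl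
  -- assemble everything
  have halg := LLaux.key_algebra
    (Matrix.of fun a b => fderiv ℝ F (hess u x₀) (Matrix.single a b 1))
    A
    (Matrix.of fun k c => pd (fun z => X z k) (Y x₀) c)
    (Matrix.of fun l k => pd2 φ x₀ l k)
    (fun k => pd φ x₀ k)
    (fun k i j => pd2 (fun z => X z k) (Y x₀) i j)
    (fun m c b => pd3 u x₀ m c b)
    hAsym hBA hWA hF3 hT3
  have hrhs : ∑ i, ∑ j,
      fderiv ℝ
        (fun N : Matrix (Fin n) (Fin n) ℝ =>
          -F (-(K • (1 : Matrix (Fin n) (Fin n) ℝ)) + N⁻¹)) A⁻¹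
        (Matrix.single i j 1)
      * pd2 (fun y => φ (X y)) (Y x₀) i j
      = ∑ i, ∑ j, (∑ a, ∑ b, A a i * A j b *
          fderiv ℝ F (hess u x₀) (Matrix.single a b 1))
        * ((∑ k, (∑ l, pd2 φ x₀ l k * pd (fun z => X z l) (Y x₀) i)
              * pd (fun z => X z k) (Y x₀) j)
          + ∑ k, pd φ x₀ k * pd2 (fun z => X z k) (Y x₀) i j) := by
    apply Finset.sum_congr rfl; intro i _
    apply Finset.sum_congr rfl; intro j _
    rw [LLaux.fderiv_G F hF K hAdet i j, hKA, hf6 i j]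
  rw [hrhs]
  exact halg
end

section
/- All eigenvalues except the largest one are bounded for semiconvex solutions of the sigma-2 equation: let K > 0 and λ = (λ₁,…,λₙ) ∈ ℝⁿ with λ₁ ≥ λ₂ ≥ ⋯ ≥ λₙ ≥ −K, σ₂(λ) = 1 and σ₁(λ) > 0. Then for every k ≥ 2, |λ_k| ≤ C(n,K) where one may take C(n,K) = max(K, (n+1)[2 + 2(n−2)K]). -/
/-!
Write `a = λ₁ ≥ b = λ₂` and let `S`, `T` be the sum and the sum of squares of the remaining
`n - 2` eigenvalues, all of which lie in `[-K, b]`. Then `S ≥ -(n-2)K` and, summing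
`(x + K)(b - x) ≥ 0`, `T ≤ (b - K) S + (n-2) K b`. Inserted into
`2 σ₂ = 2ab + 2(a + b) S + S² - T = 2`, these give `2 ≥ b (2b - 5(n-2)K)` once `b ≥ K`,
which forces `b ≤ 2 + 3(n-2)K`.
-/

open Finset

theorem Finset.sum_sq_le_of_forall_mem_Icc {ι R : Type*} [CommRing R] [LinearOrder R]
    [IsStrictOrderedRing R] (s : Finset ι) (f : ι → R) {a b : R}
    (hf : ∀ i ∈ s, f i ∈ Set.Icc a b) :
    ∑ i ∈ s, f i ^ 2 ≤ (a + b) * ∑ i ∈ s, f i - #s * (a * b) := by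
  have hpoint : ∀ i ∈ s, f i ^ 2 ≤ (a + b) * f i - a * b := fun i hi => by
    nlinarith [mul_nonneg (sub_nonneg.2 (hf i hi).1) (sub_nonneg.2 (hf i hi).2)]
  calc ∑ i ∈ s, f i ^ 2 ≤ ∑ i ∈ s, ((a + b) * f i - a * b) := sum_le_sum hpoint
    _ = (a + b) * ∑ i ∈ s, f i - #s * (a * b) := by
      rw [sum_sub_distrib, ← mul_sum, sum_const, nsmul_eq_mul]

theorem le_of_sq_add_add_sub_sq_eq_two {a b S T K c : ℝ} (hK : 0 ≤ K) (hKb : K ≤ b)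
    (hba : b ≤ a) (hc : 0 ≤ c) (hS : -c ≤ S) (hT : T ≤ (b - K) * S + c * b)
    (h : (a + b + S) ^ 2 - (a ^ 2 + b ^ 2 + T) = 2) :
    b ≤ 2 + 3 * c := by
  by_contra! hb
  -- `S² + (2a + b + K) S` increases on `[-c, ∞)`, so it is at least its value at `S = -c`.
  have hquad : 0 ≤ (S + c) * (S - c + (2 * a + b + K)) :=
    mul_nonneg (by linarith) (by linarith)
  have hmain : b * (2 * b - 5 * c) ≤ 2 := by
    nlinarith [mul_nonneg (sub_nonneg.2 hba) (by linarith : 0 ≤ b - c),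
      mul_nonneg hc (sub_nonneg.2 hKb)]
  nlinarith [mul_le_mul (by linarith : 2 ≤ b) (by linarith : 4 ≤ 2 * b - 5 * c) (by norm_num)
    (by linarith)]

theorem second_le_of_sigma2_eq_one {m : ℕ} {K : ℝ} (hK : 0 ≤ K) (l : Fin (m + 2) → ℝ)
    (hl : Antitone l) (hlow : ∀ i, -K ≤ l i)
    (h : ((∑ i, l i) ^ 2 - ∑ i, l i ^ 2) / 2 = 1) :
    l 1 ≤ max K (2 + 3 * (m * K)) := by
  rcases le_or_gt (l 1) K with hKb | hKb
  · exact le_max_of_le_left hKb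
  refine le_max_of_le_right (le_of_sq_add_add_sub_sq_eq_two
    (S := ∑ i : Fin m, l i.succ.succ) (T := ∑ i : Fin m, l i.succ.succ ^ 2)
    hK hKb.le (hl (Fin.zero_le 1)) (by positivity) ?_ ?_ ?_)
  · have := card_nsmul_le_sum univ (fun i : Fin m => l i.succ.succ) (-K) (fun i _ => hlow _)
    simpa using this
  · have htail : ∀ i ∈ (univ : Finset (Fin m)), l i.succ.succ ∈ Set.Icc (-K) (l 1) :=
      fun i _ => ⟨hlow _, hl (Fin.le_def.2 (by simp))⟩
    have := sum_sq_le_of_forall_mem_Icc univ (fun i : Fin m => l i.succ.succ) htail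
    simp only [card_univ, Fintype.card_fin] at this
    linarith
  · simp only [Fin.sum_univ_succ, Fin.succ_zero_eq_one] at h
    linarith

/-- All eigenvalues except the largest are bounded for semiconvex lambda with sigma_2 = 1. -/
theorem sigma2_lower_eigenvalues_bounded
    (n : ℕ) (hn : 2 ≤ n) (K : ℝ) (hK : 0 < K) (l : Fin n → ℝ)
    (hsort : ∀ i j : Fin n, i ≤ j → l j ≤ l i)
    (hsc : -K ≤ l ⟨n - 1, by omega⟩)
    (heq : ((∑ i, l i) ^ 2 - ∑ i, (l i) ^ 2) / 2 = 1) :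
    ∀ k : Fin n, 1 ≤ (k : ℕ) →
      |l k| ≤ max K (((n : ℝ) + 1) * (2 + 2 * ((n : ℝ) - 2) * K)) := by
  intro k hk
  obtain ⟨m, rfl⟩ := Nat.exists_eq_add_of_le' hn
  have hlow : ∀ i, -K ≤ l i := fun i =>
    hsc.trans (hsort _ _ (Fin.le_def.2 (by simp only; omega)))
  have hsecond := second_le_of_sigma2_eq_one hK.le l hsort hlow heq
  have hC : 2 + 3 * (m * K) ≤ ((↑(m + 2) : ℝ) + 1) * (2 + 2 * (↑(m + 2) - 2) * K) := by
    push_cast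
    nlinarith [mul_nonneg (Nat.cast_nonneg (α := ℝ) m) hK.le]
  rw [abs_le]
  exact ⟨(neg_le_neg (le_max_left _ _)).trans (hlow k),
    (hsort 1 k (Fin.le_def.2 (by simpa using hk))).trans (hsecond.trans (max_le_max le_rfl hC))⟩
end

section
/- Positive-definiteness of the level set structure: let λ, t ∈ ℝⁿ, set σ₁ = Σᵢ λᵢ, and suppose σ₁² = |λ|² + 2 (i.e. σ₂(λ) = 1) and Σᵢ (σ₁ − λᵢ) tᵢ = 0. Then −Σ_{i≠j} tᵢ tⱼ = [ (|λ|² + 2)|t|² − ⟨λ, t⟩² ] / σ₁², and in particular −Σ_{i≠j} tᵢ tⱼ ≥ 0 by the Cauchy–Schwarz inequality. -/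
/-!
The orthogonality condition says `⟨λ, t⟩ = σ₁ ∑ tᵢ`, so with `σ₁² = |λ|² + 2` the numerator is
`σ₁² (|t|² - (∑ tᵢ)²)`, while the cross sum `∑_{i≠j} tᵢ tⱼ` is `(∑ tᵢ)² - |t|²`. Nonnegativity then
follows from Cauchy–Schwarz, `⟨λ, t⟩² ≤ |λ|² |t|²`.
-/

open Finset

theorem Finset.sum_sum_ite_ne_mul {ι R : Type*} [DecidableEq ι] [CommRing R] (s : Finset ι)
    (f : ι → R) :
    ∑ i ∈ s, ∑ j ∈ s, (if i ≠ j then f i * f j else 0) =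
      (∑ i ∈ s, f i) ^ 2 - ∑ i ∈ s, f i ^ 2 := by
  have hsplit : ∀ i j,
      (if i ≠ j then f i * f j else 0) = f i * f j - if i = j then f i * f j else 0 :=
    fun i j => by by_cases h : i = j <;> simp [h]
  simp only [hsplit, sum_sub_distrib, sum_ite_eq, ← mul_sum, ← sum_mul, sq]
  congr 1
  exact sum_congr rfl fun i hi => by simp [hi]

theorem Finset.sum_mul_eq_mul_sum_of_sum_sub_mul_eq_zero {ι R : Type*} [CommRing R]
    {s : Finset ι} {l t : ι → R} {c : R} (h : ∑ i ∈ s, (c - l i) * t i = 0) :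
    ∑ i ∈ s, l i * t i = c * ∑ i ∈ s, t i := by
  rw [mul_sum, eq_comm, ← sub_eq_zero, ← sum_sub_distrib, ← h]
  exact sum_congr rfl fun i _ => by ring

/-- Convexity of the level set of the sigma-2 equation: the cross terms have a positive
representation, hence are nonnegative. -/
theorem sigma2_level_set_positivity
    (n : ℕ) (l t : Fin n → ℝ)
    (heq : (∑ i, l i) ^ 2 = (∑ i, (l i) ^ 2) + 2)
    (horth : ∑ i, ((∑ j, l j) - l i) * t i = 0) :
    -(∑ i, ∑ j, if i ≠ j then t i * t j else 0)
        = (((∑ i, (l i) ^ 2) + 2) * (∑ i, (t i) ^ 2) - (∑ i, l i * t i) ^ 2) /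
            (∑ i, l i) ^ 2 ∧
      0 ≤ -(∑ i, ∑ j, if i ≠ j then t i * t j else 0) := by
  have hσ : (∑ i, l i) ^ 2 ≠ 0 := by
    rw [heq]; positivity
  have hformula : -(∑ i, ∑ j, if i ≠ j then t i * t j else 0)
      = (((∑ i, (l i) ^ 2) + 2) * (∑ i, (t i) ^ 2) - (∑ i, l i * t i) ^ 2) / (∑ i, l i) ^ 2 := by
    rw [sum_sum_ite_ne_mul, eq_div_iff hσ, sum_mul_eq_mul_sum_of_sum_sub_mul_eq_zero horth, ← heq]
    ring
  refine ⟨hformula, hformula ▸ div_nonneg ?_ (sq_nonneg _)⟩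
  nlinarith [sum_mul_sq_le_sq_mul_sq univ l t, sum_nonneg fun i (_ : i ∈ univ) => sq_nonneg (t i)]
end

section
/- Equation for second derivatives of a solution: let u be a smooth solution of σ₂(D²u) = (1/2)[(Δu)² − |D²u|²] = 1 on an open set Ω ⊂ ℝⁿ with F_{ij} = Δu·δ_{ij} − u_{ij}. Then for all indices i, j and all x ∈ Ω, Σ_{α,β} F_{αβ}(x) ∂_{αβ}(∂_{ij}u)(x) = Σ_{α≠β} [ ∂_{iαβ}u · ∂_{jαβ}u − ∂_{iββ}u · ∂_{jαα}u ](x). -/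
open Metric Real

/-!
The derivative of `σ₂` at `H` in direction `K` is `tr H · tr K - ⟨H, K⟩ = Σ F_{αβ}(H) K_{αβ}`, so
differentiating `σ₂(D²u) = 1` in `x_k` gives `Σ F_{αβ} ∂_{αβ}u_k = 0`. Differentiating once more
in `x_i`, with `∂_i F_{αβ} = δ_{αβ} Δu_i - u_{iαβ}`, yields
`Σ F_{αβ} u_{ijαβ} = Σ u_{iαβ} u_{jαβ} - Δu_i Δu_j`, and the diagonal terms `α = β` cancel.
Smoothness is used to commute partial derivatives of order up to four.
-/

open Filter Topology Finset

section Algebra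

variable {ι R : Type*} [Fintype ι] [DecidableEq ι] [CommRing R]

theorem sum_sum_trace_mul_ite_sub_mul (A B : ι → ι → R) :
    ∑ a, ∑ b, ((∑ k, A k k) * (if a = b then 1 else 0) - A a b) * B a b
      = (∑ k, A k k) * ∑ k, B k k - ∑ a, ∑ b, A a b * B a b := by
  simp only [sub_mul, mul_assoc, ite_mul, one_mul, zero_mul, mul_ite, mul_zero, sum_sub_distrib,
    sum_ite_eq, mem_univ, if_true, mul_sum]

theorem sum_sum_ite_ne_mul_sub_mul (A B : ι → ι → R) :
    ∑ a, ∑ b, (if a ≠ b then A a b * B a b - A b b * B a a else 0)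
      = ∑ a, ∑ b, A a b * B a b - (∑ k, A k k) * ∑ k, B k k := by
  have hdiag : ∀ a b, (if a ≠ b then A a b * B a b - A b b * B a a else 0)
      = A a b * B a b - A b b * B a a := by
    intro a b
    by_cases h : a = b
    · subst h; simp
    · simp [h]
  simp only [hdiag, sum_sub_distrib, sum_mul_sum]
  rw [sum_comm (f := fun a b => A b b * B a a)]

end Algebra

section Calculus

variable {n : ℕ} {f g : EuclideanSpace ℝ (Fin n) → ℝ} {x : EuclideanSpace ℝ (Fin n)}

theorem pd_congr (h : f =ᶠ[𝓝 x] g) (a : Fin n) : pd f x a = pd g x a := by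
  rw [pd, pd, h.fderiv_eq]

theorem pd_eq_zero_of_eventuallyEq_const {c : ℝ} (h : f =ᶠ[𝓝 x] fun _ => c) (a : Fin n) :
    pd f x a = 0 := by
  rw [pd_congr h, pd, fderiv_const_apply, zero_apply]

theorem pd_sub (hf : DifferentiableAt ℝ f x) (hg : DifferentiableAt ℝ g x) (a : Fin n) :
    pd (fun y => f y - g y) x a = pd f x a - pd g x a := by
  simp [pd, fderiv_fun_sub hf hg]

theorem pd_mul (hf : DifferentiableAt ℝ f x) (hg : DifferentiableAt ℝ g x) (a : Fin n) :
    pd (fun y => f y * g y) x a = pd f x a * g x + f x * pd g x a := by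
  simp [pd, fderiv_fun_mul hf hg]
  ring

theorem pd_mul_const (hf : DifferentiableAt ℝ f x) (c : ℝ) (a : Fin n) :
    pd (fun y => f y * c) x a = pd f x a * c := by
  rw [pd, pd, fderiv_mul_const hf]
  simp [mul_comm]

theorem pd_div_const (hf : DifferentiableAt ℝ f x) (c : ℝ) (a : Fin n) :
    pd (fun y => f y / c) x a = pd f x a / c := by
  simp only [div_eq_mul_inv, pd_mul_const hf]

theorem pd_sum {ι : Type*} (s : Finset ι) {F : ι → EuclideanSpace ℝ (Fin n) → ℝ}
    (hF : ∀ i ∈ s, DifferentiableAt ℝ (F i) x) (a : Fin n) :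
    pd (fun y => ∑ i ∈ s, F i y) x a = ∑ i ∈ s, pd (F i) x a := by
  simp [pd, fderiv_fun_sum hF]

theorem pd_sum_sum_mul {ι : Type*} [Fintype ι] {F G : ι → ι → EuclideanSpace ℝ (Fin n) → ℝ}
    (hF : ∀ i j, DifferentiableAt ℝ (F i j) x) (hG : ∀ i j, DifferentiableAt ℝ (G i j) x)
    (a : Fin n) :
    pd (fun y => ∑ i, ∑ j, F i j y * G i j y) x a
      = ∑ i, ∑ j, (pd (F i j) x a * G i j x + F i j x * pd (G i j) x a) := by
  rw [pd_sum _ fun i _ => DifferentiableAt.fun_sum fun j _ => (hF i j).fun_mul (hG i j)]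
  refine sum_congr rfl fun i _ => ?_
  rw [pd_sum _ fun j _ => (hF i j).fun_mul (hG i j)]
  exact sum_congr rfl fun j _ => pd_mul (hF i j) (hG i j) a

theorem pd_sigma2M {H : EuclideanSpace ℝ (Fin n) → Matrix (Fin n) (Fin n) ℝ}
    (hH : ∀ i j, DifferentiableAt ℝ (fun y => H y i j) x) (a : Fin n) :
    pd (fun y => sigma2M (H y)) x a
      = ∑ i, ∑ j, ((∑ k, H x k k) * (if i = j then 1 else 0) - H x i j)
          * pd (fun y => H y i j) x a := by
  have htr : DifferentiableAt ℝ (fun y => ∑ k, H y k k) x :=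
    DifferentiableAt.fun_sum fun k _ => hH k k
  have hsq : DifferentiableAt ℝ (fun y => ∑ i, ∑ j, H y i j * H y i j) x :=
    DifferentiableAt.fun_sum fun i _ => DifferentiableAt.fun_sum fun j _ =>
      (hH i j).fun_mul (hH i j)
  have hσ : (fun y => sigma2M (H y))
      = fun y => ((∑ k, H y k k) * (∑ k, H y k k) - ∑ i, ∑ j, H y i j * H y i j) / 2 := by
    ext y
    simp only [sigma2M, sq]
  rw [sum_sum_trace_mul_ite_sub_mul (fun i j => H x i j) fun i j => pd (fun y => H y i j) x a,
    hσ, pd_div_const (htr.fun_mul htr |>.fun_sub hsq), pd_sub (htr.fun_mul htr) hsq,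
    pd_mul htr htr, pd_sum_sum_mul hH hH, pd_sum _ fun k _ => hH k k]
  simp only [sum_add_distrib, mul_comm (pd _ x a)]
  ring

end Calculus

section Smooth

variable {n : ℕ} {Ω : Set (EuclideanSpace ℝ (Fin n))} {u : EuclideanSpace ℝ (Fin n) → ℝ}
  {x : EuclideanSpace ℝ (Fin n)}

theorem ContDiffOn.pd (hu : ContDiffOn ℝ (⊤ : ℕ∞) u Ω) (hΩ : IsOpen Ω) (a : Fin n) :
    ContDiffOn ℝ (⊤ : ℕ∞) (fun y => pd u y a) Ω :=
  (hu.fderiv_of_isOpen hΩ le_rfl).clm_apply contDiffOn_const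

theorem ContDiffOn.differentiableAt_of_isOpen (hu : ContDiffOn ℝ (⊤ : ℕ∞) u Ω) (hΩ : IsOpen Ω)
    (hx : x ∈ Ω) : DifferentiableAt ℝ u x :=
  (hu.contDiffAt (hΩ.mem_nhds hx)).differentiableAt (by simp)

theorem ContDiffOn.differentiableAt_pd2 (hu : ContDiffOn ℝ (⊤ : ℕ∞) u Ω) (hΩ : IsOpen Ω)
    (hx : x ∈ Ω) (a b : Fin n) : DifferentiableAt ℝ (fun y => pd2 u y a b) x :=
  ((hu.pd hΩ b).pd hΩ a).differentiableAt_of_isOpen hΩ hx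

theorem pd2_comm (hu : ContDiffAt ℝ 2 u x) (a b : Fin n) : pd2 u x a b = pd2 u x b a := by
  have hd : DifferentiableAt ℝ (fderiv ℝ u) x :=
    (hu.fderiv_right (m := 1) le_rfl).differentiableAt one_ne_zero
  have hpd : ∀ v w : EuclideanSpace ℝ (Fin n),
      fderiv ℝ (fun y => fderiv ℝ u y w) x v = fderiv ℝ (fderiv ℝ u) x v w := by
    intro v w
    simp [fderiv_clm_apply hd (differentiableAt_const w)]
  simp only [pd2, pd, hpd, (hu.isSymmSndFDerivAt (by simp)).eq]

theorem pd3_eq_pd2_pd (hu : ContDiffOn ℝ (⊤ : ℕ∞) u Ω) (hΩ : IsOpen Ω) (hx : x ∈ Ω)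
    (i a b : Fin n) : pd3 u x i a b = pd2 (fun y => pd u y i) x a b := by
  have hC2 : ContDiffAt ℝ 2 (fun y => pd u y b) x :=
    ((hu.pd hΩ b).contDiffAt (hΩ.mem_nhds hx)).of_le (WithTop.coe_le_coe.mpr le_top)
  have hcomm : (fun y => pd2 u y i b) =ᶠ[𝓝 x] fun y => pd2 u y b i :=
    eventually_of_mem (hΩ.mem_nhds hx) fun y hy =>
      pd2_comm ((hu.contDiffAt (hΩ.mem_nhds hy)).of_le (WithTop.coe_le_coe.mpr le_top)) i b
  calc pd3 u x i a b = pd2 (fun y => pd u y b) x a i := pd2_comm hC2 i a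
    _ = pd2 (fun y => pd u y i) x a b := pd_congr hcomm a

end Smooth

section Sigma2

variable {n : ℕ} {Ω : Set (EuclideanSpace ℝ (Fin n))} {u : EuclideanSpace ℝ (Fin n) → ℝ}
  {x : EuclideanSpace ℝ (Fin n)}

theorem pd_Fcoef (hu : ContDiffOn ℝ (⊤ : ℕ∞) u Ω) (hΩ : IsOpen Ω) (hx : x ∈ Ω) (i a b : Fin n) :
    pd (fun y => Fcoef u y a b) x i
      = (∑ k, pd3 u x i k k) * (if a = b then 1 else 0) - pd3 u x i a b := by
  have hd := hu.differentiableAt_pd2 hΩ hx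
  have htr : DifferentiableAt ℝ (fun y => ∑ k, pd2 u y k k) x :=
    DifferentiableAt.fun_sum fun k _ => hd k k
  unfold Fcoef
  rw [pd_sub (htr.mul_const _) (hd a b), pd_mul_const htr, pd_sum _ fun k _ => hd k k]
  rfl

theorem sum_sum_Fcoef_mul_pd2_pd_eq_zero (hu : ContDiffOn ℝ (⊤ : ℕ∞) u Ω) (hΩ : IsOpen Ω)
    (heq : ∀ y ∈ Ω, sigma2M (hess u y) = 1) (hx : x ∈ Ω) (k : Fin n) :
    ∑ α, ∑ β, Fcoef u x α β * pd2 (fun y => pd u y k) x α β = 0 := by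
  have hconst : pd (fun y => sigma2M (hess u y)) x k = 0 :=
    pd_eq_zero_of_eventuallyEq_const (eventually_of_mem (hΩ.mem_nhds hx) heq) k
  rw [pd_sigma2M (H := hess u) (hu.differentiableAt_pd2 hΩ hx)] at hconst
  rw [← hconst]
  refine sum_congr rfl fun α _ => sum_congr rfl fun β _ => ?_
  rw [← pd3_eq_pd2_pd hu hΩ hx]
  rfl

theorem sum_sum_Fcoef_mul_pd2_pd2 (hu : ContDiffOn ℝ (⊤ : ℕ∞) u Ω) (hΩ : IsOpen Ω)
    (heq : ∀ y ∈ Ω, sigma2M (hess u y) = 1) (hx : x ∈ Ω) (i j : Fin n) :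
    ∑ α, ∑ β, Fcoef u x α β * pd2 (fun y => pd2 u y i j) x α β
      = ∑ α, ∑ β, pd3 u x i α β * pd3 u x j α β - (∑ k, pd3 u x i k k) * ∑ k, pd3 u x j k k := by
  have hd := hu.differentiableAt_pd2 hΩ hx
  have hdF : ∀ α β, DifferentiableAt ℝ (fun y => Fcoef u y α β) x := fun α β =>
    ((DifferentiableAt.fun_sum fun k _ => hd k k).mul_const _).fun_sub (hd α β)
  have hzero : pd (fun y => ∑ α, ∑ β, Fcoef u y α β * pd2 (fun z => pd u z j) y α β) x i = 0 :=
    pd_eq_zero_of_eventuallyEq_const (eventually_of_mem (hΩ.mem_nhds hx) fun y hy =>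
      sum_sum_Fcoef_mul_pd2_pd_eq_zero hu hΩ heq hy j) i
  have hthird : ∀ α β, pd2 (fun z => pd u z j) x α β = pd3 u x j α β := fun α β =>
    (pd3_eq_pd2_pd hu hΩ hx j α β).symm
  have hfourth : ∀ α β, pd (fun y => pd2 (fun z => pd u z j) y α β) x i
      = pd2 (fun y => pd2 u y i j) x α β := fun α β =>
    pd3_eq_pd2_pd (hu.pd hΩ j) hΩ hx i α β
  rw [pd_sum_sum_mul hdF ((hu.pd hΩ j).differentiableAt_pd2 hΩ hx)] at hzero
  simp only [pd_Fcoef hu hΩ hx, hthird, hfourth, sum_add_distrib, sum_sum_trace_mul_ite_sub_mul]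
    at hzero
  linarith

end Sigma2

/-- Equation satisfied by second derivatives of a solution of the sigma-2 equation. -/
theorem sigma2_second_derivative_equation
    (n : ℕ) (Ω : Set (EuclideanSpace ℝ (Fin n))) (hΩ : IsOpen Ω)
    (u : EuclideanSpace ℝ (Fin n) → ℝ) (hu : ContDiffOn ℝ (⊤ : ℕ∞) u Ω)
    (heq : ∀ x ∈ Ω, sigma2M (hess u x) = 1) :
    ∀ i j : Fin n, ∀ x ∈ Ω,
      ∑ α, ∑ β, Fcoef u x α β * pd2 (fun y => pd2 u y i j) x α β
        = ∑ α, ∑ β, if α ≠ β then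
            pd3 u x i α β * pd3 u x j α β - pd3 u x i β β * pd3 u x j α α
          else 0 := by
  intro i j x hx
  rw [sum_sum_Fcoef_mul_pd2_pd2 hu hΩ heq hx, sum_sum_ite_ne_mul_sub_mul]
end

section
/- Bound on the ellipticity ratio by the square of the largest eigenvalue: there is a constant C(n) such that for every λ ∈ ℝⁿ with λ₁ ≥ λ₂ ≥ ⋯ ≥ λₙ, σ₂(λ) = 1 and σ₁(λ) > 0, one has ( max_{1≤i≤n} (σ₁ − λᵢ) )ⁿ / ∏_{i=1}^{n} (σ₁ − λᵢ) ≤ C(n) λ₁². -/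
/-!
Write `s = σ₁`, so that `s² = |λ|² + 2`. Every `|λᵢ| < s`, hence all `s - λᵢ` lie in `(0, 2s]`,
and `s² - λᵢ² ≤ 2s (s - λᵢ)` turns the denominator into `∏ (s² - λᵢ²) / (2s)ⁿ`. In that product
the factor `i = 1` is at least `2` and every other factor is at least `λ₁²`, because
`λ₁² + λᵢ² + 2 ≤ s²`. Hence the ratio is at most `(2s)²ⁿ / λ₁²⁽ⁿ⁻¹⁾`, and `s ≤ n λ₁` gives
`(2n)²ⁿ λ₁²`.
-/

open Finset

theorem sq_sub_sq_le_two_mul_mul_sub (a b : ℝ) : a ^ 2 - b ^ 2 ≤ 2 * a * (a - b) := by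
  nlinarith [sq_nonneg (a - b)]

section

variable {ι : Type*} [Fintype ι] {l : ι → ℝ}

theorem sq_add_two_le_sq_sum (hσ : (∑ j, l j) ^ 2 = ∑ j, l j ^ 2 + 2) (i : ι) :
    l i ^ 2 + 2 ≤ (∑ j, l j) ^ 2 := by
  have := single_le_sum (f := fun j => l j ^ 2) (fun j _ => sq_nonneg (l j)) (mem_univ i)
  linarith

theorem sq_add_sq_add_two_le_sq_sum (hσ : (∑ j, l j) ^ 2 = ∑ j, l j ^ 2 + 2) {i k : ι}
    (hik : i ≠ k) : l i ^ 2 + l k ^ 2 + 2 ≤ (∑ j, l j) ^ 2 := by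
  classical
  have := sum_le_sum_of_subset_of_nonneg (f := fun j => l j ^ 2) (subset_univ {i, k})
    (fun j _ _ => sq_nonneg (l j))
  rw [sum_pair hik] at this
  linarith

theorem abs_lt_sum (hσ : (∑ j, l j) ^ 2 = ∑ j, l j ^ 2 + 2) (hs : 0 < ∑ j, l j) (i : ι) :
    |l i| < ∑ j, l j :=
  abs_lt_of_sq_lt_sq (by linarith [sq_add_two_le_sq_sum hσ i]) hs.le

theorem pow_card_sub_one_le_prod_sq_sum_sub_sq (hσ : (∑ j, l j) ^ 2 = ∑ j, l j ^ 2 + 2)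
    (i₀ : ι) : (l i₀ ^ 2) ^ (Fintype.card ι - 1) ≤ ∏ i, ((∑ j, l j) ^ 2 - l i ^ 2) := by
  classical
  rw [← mul_prod_erase univ _ (mem_univ i₀)]
  have hfirst : 1 ≤ (∑ j, l j) ^ 2 - l i₀ ^ 2 := by linarith [sq_add_two_le_sq_sum hσ i₀]
  have hrest : (l i₀ ^ 2) ^ (Fintype.card ι - 1)
      ≤ ∏ i ∈ univ.erase i₀, ((∑ j, l j) ^ 2 - l i ^ 2) := by
    rw [← card_univ, ← card_erase_of_mem (mem_univ i₀), ← prod_const]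
    exact prod_le_prod (fun _ _ => sq_nonneg _) fun i hi => by
      linarith [sq_add_sq_add_two_le_sq_sum hσ (ne_of_mem_erase hi)]
  exact hrest.trans
    (le_mul_of_one_le_left ((pow_nonneg (sq_nonneg _) _).trans hrest) hfirst)

theorem sup'_sum_sub_pow_div_prod_le (hσ : (∑ j, l j) ^ 2 = ∑ j, l j ^ 2 + 2)
    (hs : 0 < ∑ j, l j) {i₀ : ι} (hmax : ∀ i, l i ≤ l i₀) (hne : (univ : Finset ι).Nonempty) :
    (univ.sup' hne fun i => ∑ j, l j - l i) ^ Fintype.card ι / ∏ i, (∑ j, l j - l i)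
      ≤ (2 * Fintype.card ι) ^ (2 * Fintype.card ι) * l i₀ ^ 2 := by
  set s := ∑ j, l j
  set n := Fintype.card ι
  have hgap : ∀ i, 0 < s - l i ∧ s - l i ≤ 2 * s := fun i => by
    have := abs_lt.mp (abs_lt_sum hσ hs i)
    constructor <;> linarith
  have hP : 0 < ∏ i, (s - l i) := prod_pos fun i _ => (hgap i).1
  have hsum : s ≤ n * l i₀ := by
    simpa using sum_le_card_nsmul univ l (l i₀) fun i _ => hmax i
  have hl₀ : 0 < l i₀ := pos_of_mul_pos_right (hs.trans_le hsum) (Nat.cast_nonneg n)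
  have hn : 1 ≤ n := Fintype.card_pos_iff.mpr ⟨i₀⟩
  have hsup : (univ.sup' hne fun i => s - l i) ^ n ≤ (2 * s) ^ n :=
    pow_le_pow_left₀ ((hgap i₀).1.le.trans (le_sup' (fun i => s - l i) (mem_univ i₀)))
      (sup'_le _ _ fun i _ => (hgap i).2) n
  have hdenom : ∏ i, (s ^ 2 - l i ^ 2) ≤ (2 * s) ^ n * ∏ i, (s - l i) := by
    calc ∏ i, (s ^ 2 - l i ^ 2) ≤ ∏ i, (2 * s * (s - l i)) :=
          prod_le_prod (fun i _ => by linarith [sq_add_two_le_sq_sum hσ i])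
            fun i _ => sq_sub_sq_le_two_mul_mul_sub s (l i)
      _ = (2 * s) ^ n * ∏ i, (s - l i) := by rw [prod_mul_distrib, prod_const, card_univ]
  have hpow :
      (2 * (n * l i₀)) ^ (2 * n) = (2 * n) ^ (2 * n) * l i₀ ^ 2 * (l i₀ ^ 2) ^ (n - 1) := by
    rw [← mul_assoc, mul_pow, pow_mul (l i₀), mul_assoc, ← pow_succ', Nat.sub_add_cancel hn]
  rw [div_le_iff₀ hP]
  refine le_of_mul_le_mul_right ?_ (pow_pos (pow_pos hl₀ 2) (n - 1))
  calc (univ.sup' hne fun i => s - l i) ^ n * (l i₀ ^ 2) ^ (n - 1)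
      ≤ (2 * s) ^ n * ((2 * s) ^ n * ∏ i, (s - l i)) :=
        mul_le_mul hsup ((pow_card_sub_one_le_prod_sq_sum_sub_sq hσ i₀).trans hdenom)
          (by positivity) (by positivity)
    _ = (2 * s) ^ (2 * n) * ∏ i, (s - l i) := by ring
    _ ≤ (2 * (n * l i₀)) ^ (2 * n) * ∏ i, (s - l i) := by gcongr
    _ = _ := by rw [hpow]; ring

end

/-- Bound on the ellipticity ratio of the linearized operator of the sigma-2 equation by
the square of the largest eigenvalue. -/
theorem sigma2_ellipticity_ratio_bound (n : ℕ) (hn : 1 ≤ n) :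
    ∃ C : ℝ, 0 < C ∧
      ∀ l : Fin n → ℝ,
        (∀ i j : Fin n, i ≤ j → l j ≤ l i) →
        ((∑ i, l i) ^ 2 - ∑ i, (l i) ^ 2) / 2 = 1 →
        0 < ∑ i, l i →
        (Finset.univ.sup' (Finset.univ_nonempty_iff.mpr ⟨⟨0, by omega⟩⟩)
              fun i : Fin n => (∑ j, l j) - l i) ^ n /
            (∏ i, ((∑ j, l j) - l i))
          ≤ C * (l ⟨0, by omega⟩) ^ 2 := by
  refine ⟨(2 * n) ^ (2 * n), by positivity, fun l hsort hσ₂ hs => ?_⟩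
  have := sup'_sum_sub_pow_div_prod_le (by linarith) hs
    (fun i => hsort ⟨0, by omega⟩ i (Nat.zero_le _)) (Finset.univ_nonempty_iff.mpr ⟨⟨0, by omega⟩⟩)
  simpa only [Fintype.card_fin] using this
end
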